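/- arXiv:1905.04719 — 7 statements merged into one kernel-verified Lean document; each statement's English description precedes it below -/
import Mathlib

section
/- Assume every vector in the finite set 𝒱 of rate vectors has at least one strictly positive coordinate, and let x : 𝒱 → ℝ be MP-feasible. For a rate vector v, let minpos(v) denote the least flow index f with v f > 0. Enumerate 𝒱 as v₁, …, vₙ in any order that is nondecreasing in minpos (i.e., minpos(vₖ) < minpos(vₗ) implies k < l). Then the schedule (v₁, x v₁), …, (vₙ, x vₙ) is feasible: for every flow f, Σ_{k=1}^n vₖ f · (x vₖ) = s f, and every segment k with vₖ f > 0 satisfies Σ_{j=1}^{k} x vⱼ ≤ t f. -/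
open scoped Classical BigOperators

/-- A list of segments is a schedule if every rate vector is componentwise
nonnegative and every duration is nonnegative. -/
def IsSchedule {F : ℕ} (L : List ((Fin F → ℝ) × ℝ)) : Prop :=
  ∀ seg ∈ L, (∀ f, 0 ≤ seg.1 f) ∧ 0 ≤ seg.2

/-- A schedule is feasible if for every flow `f`, the total amount delivered equals `s f`
and every segment in which flow `f` has positive rate finishes by the deadline `t f`. -/
def FeasibleSchedule {F : ℕ} (s t : Fin F → ℝ) (L : List ((Fin F → ℝ) × ℝ)) : Prop :=
  IsSchedule L ∧
  ∀ f : Fin F,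
    ((L.map fun seg => seg.1 f * seg.2).sum = s f) ∧
    ∀ k : Fin L.length, 0 < (L.get k).1 f →
      ((L.take ((k : ℕ) + 1)).map Prod.snd).sum ≤ t f

/-- `x` is a feasible solution of the master problem (MP) over the finite set `𝒱` of
rate vectors: it is nonnegative, satisfies the demand constraints
`∑_{v ∈ 𝒱_f} v f * x v = s f`, and the deadline constraints
`∑_{v ∈ 𝒱_0 ∪ ⋯ ∪ 𝒱_f} x v ≤ t f`. -/
def MPFeasible {F : ℕ} (s t : Fin F → ℝ) (𝒱 : Finset (Fin F → ℝ))
    (x : (Fin F → ℝ) → ℝ) : Prop :=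
  (∀ v ∈ 𝒱, 0 ≤ x v) ∧
  (∀ f : Fin F, ∑ v ∈ 𝒱.filter (fun v => 0 < v f), v f * x v = s f) ∧
  (∀ f : Fin F, ∑ v ∈ 𝒱.filter (fun v => ∃ i ≤ f, 0 < v i), x v ≤ t f)

/-!
Every `v ∈ 𝒱` with `v f = 0` contributes nothing to `∑ v f * x v`, so the amount the schedule
delivers to flow `f` is the left side of the MP demand constraint. If segment `k` serves flow `f`,
then `minpos v_k ≤ f`, and every earlier segment `v_j` has `minpos v_j ≤ minpos v_k` by the
ordering; so the segments up to `k` are distinct members of `𝒱_0 ∪ ⋯ ∪ 𝒱_f`, and their total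
duration is bounded by the MP deadline constraint for `f`.
-/

namespace List

variable {α : Type*}

theorem pairwise_key_le_of_key_lt_imp_lt {β : Type*} [LinearOrder β] {L : List α} (key : α → β)
    (hsorted : ∀ k l : Fin L.length, key (L.get k) < key (L.get l) → (k : ℕ) < l) :
    L.Pairwise fun a b => key a ≤ key b := by
  refine pairwise_iff_getElem.2 fun i j hi hj hij => ?_
  by_contra! hlt
  have := hsorted ⟨j, hj⟩ ⟨i, hi⟩ hlt
  simp only at this
  omega

theorem Pairwise.rel_getElem_of_mem_take_succ {R : α → α → Prop} [Std.Refl R] {L : List α}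
    (hL : L.Pairwise R) {k : ℕ} (hk : k < L.length) {v : α} (hv : v ∈ L.take (k + 1)) :
    R v L[k] := by
  obtain ⟨j, hj, rfl⟩ := mem_iff_getElem.1 hv
  rw [getElem_take]
  have hjk : j ≤ k := by simp only [length_take] at hj; omega
  rcases hjk.lt_or_eq with hlt | rfl
  · exact pairwise_iff_getElem.1 hL j k _ hk hlt
  · exact refl _

theorem Nodup.sum_map_le_sum_of_subset {M : Type*} [AddCommMonoid M] [PartialOrder M]
    [IsOrderedAddMonoid M] {T : List α} (hT : T.Nodup) {S : Finset α} (hTS : ∀ v ∈ T, v ∈ S)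
    {x : α → M} (hx : ∀ v ∈ S, 0 ≤ x v) : (T.map x).sum ≤ ∑ v ∈ S, x v := by
  rw [← sum_toFinset x hT]
  exact Finset.sum_le_sum_of_subset_of_nonneg (fun v hv => hTS v (mem_toFinset.1 hv))
    fun v hv _ => hx v hv

end List

theorem feasibleSchedule_map_iff {F : ℕ} (s t : Fin F → ℝ) (L : List (Fin F → ℝ))
    (x : (Fin F → ℝ) → ℝ) :
    FeasibleSchedule s t (L.map fun v => (v, x v)) ↔
      (∀ v ∈ L, (∀ f, 0 ≤ v f) ∧ 0 ≤ x v) ∧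
      ∀ f : Fin F, (L.map fun v => v f * x v).sum = s f ∧
        ∀ (k : ℕ) (hk : k < L.length), 0 < L[k] f → ((L.take (k + 1)).map x).sum ≤ t f := by
  simp only [FeasibleSchedule, IsSchedule, List.forall_mem_map, List.map_map, Fin.forall_iff,
    List.length_map, List.get_eq_getElem, List.getElem_map, ← List.map_take]
  rfl

theorem mp_solution_yields_feasible_schedule_general {F : ℕ}
    (s t : Fin F → ℝ)
    (𝒱 : Finset (Fin F → ℝ)) (hnn : ∀ v ∈ 𝒱, ∀ f, 0 ≤ v f)
    (x : (Fin F → ℝ) → ℝ) (hx : MPFeasible s t 𝒱 x)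
    -- `minpos v` is the least flow index with a strictly positive rate in `v`;
    -- in particular every `v ∈ 𝒱` has at least one strictly positive coordinate.
    (minpos : (Fin F → ℝ) → Fin F)
    (hminpos : ∀ v ∈ 𝒱, 0 < v (minpos v) ∧ ∀ i, 0 < v i → minpos v ≤ i)
    -- `L` enumerates `𝒱` in an order nondecreasing in `minpos`.
    (L : List (Fin F → ℝ)) (hnodup : L.Nodup) (hmem : ∀ v, v ∈ L ↔ v ∈ 𝒱)
    (hsorted : ∀ k l : Fin L.length,
      minpos (L.get k) < minpos (L.get l) → (k : ℕ) < (l : ℕ)) :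
    FeasibleSchedule s t (L.map fun v => (v, x v)) := by
  obtain ⟨hxnn, hdemand, hdeadline⟩ := hx
  have hL : L.toFinset = 𝒱 := by ext v; simp [hmem]
  have hpw := List.pairwise_key_le_of_key_lt_imp_lt minpos hsorted
  refine (feasibleSchedule_map_iff s t L x).2
    ⟨fun v hv => ⟨hnn v ((hmem v).1 hv), hxnn v ((hmem v).1 hv)⟩, fun f => ⟨?_, fun k hk hpos => ?_⟩⟩
  · rw [← List.sum_toFinset _ hnodup, hL, ← hdemand f]
    refine (Finset.sum_filter_of_ne fun v hv hne => ?_).symm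
    exact (hnn v hv f).lt_of_ne' fun h => hne (by rw [h, zero_mul])
  · have hminf : minpos L[k] ≤ f := (hminpos _ ((hmem _).1 (L.getElem_mem hk))).2 f hpos
    refine le_trans ?_ (hdeadline f)
    refine (hnodup.sublist (L.take_sublist _)).sum_map_le_sum_of_subset (fun v hv => ?_)
      fun v hv => hxnn v (Finset.mem_filter.1 hv).1
    have hv𝒱 := (hmem v).1 (List.mem_of_mem_take hv)
    exact Finset.mem_filter.2 ⟨hv𝒱, minpos v,
      (hpw.rel_getElem_of_mem_take_succ hk hv).trans hminf, (hminpos v hv𝒱).1⟩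

/-- Scheduling the rate vectors of an MP-feasible solution, with their
respective durations, in any order nondecreasing in the least positive flow index,
yields a feasible schedule. -/
theorem mp_solution_yields_feasible_schedule {F : ℕ} (hF : 1 ≤ F)
    (s t : Fin F → ℝ) (hs : ∀ f, 0 < s f) (ht : ∀ f, 0 < t f)
    (hmono : Monotone t)
    (𝒱 : Finset (Fin F → ℝ)) (hnn : ∀ v ∈ 𝒱, ∀ f, 0 ≤ v f)
    (x : (Fin F → ℝ) → ℝ) (hx : MPFeasible s t 𝒱 x)
    -- `minpos v` is the least flow index with a strictly positive rate in `v`;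
    -- in particular every `v ∈ 𝒱` has at least one strictly positive coordinate.
    (minpos : (Fin F → ℝ) → Fin F)
    (hminpos : ∀ v ∈ 𝒱, 0 < v (minpos v) ∧ ∀ i, 0 < v i → minpos v ≤ i)
    -- `L` enumerates `𝒱` in an order nondecreasing in `minpos`.
    (L : List (Fin F → ℝ)) (hnodup : L.Nodup) (hmem : ∀ v, v ∈ L ↔ v ∈ 𝒱)
    (hsorted : ∀ k l : Fin L.length,
      minpos (L.get k) < minpos (L.get l) → (k : ℕ) < (l : ℕ)) :
    FeasibleSchedule s t (L.map fun v => (v, x v)) :=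
  mp_solution_yields_feasible_schedule_general s t 𝒱 hnn x hx minpos hminpos L hnodup hmem hsorted
end

section
/- Let 𝒱 be a finite nonempty set of rate vectors, each having at least one strictly positive coordinate. There exists a feasible schedule all of whose segments use rate vectors belonging to 𝒱 if and only if there exists an MP-feasible x : 𝒱 → ℝ. Moreover, when they exist, the minimum makespan over all feasible schedules using vectors from 𝒱 equals the minimum of Σ_{v ∈ 𝒱} x v over all MP-feasible x. -/
open scoped Classical BigOperators

/-!
A feasible schedule yields an MP-feasible `x` by letting `x v` be the total time spent at
rate `v`: the segments whose rate serves some flow `i ≤ f` all end by `t i ≤ t f`, so their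
total duration is at most `t f`. Conversely, running every `v ∈ 𝒱` for time `x v`, in
increasing order of the first flow `v` serves, is a feasible schedule: all segments up to one
serving `f` serve some flow `≤ f`, so the MP constraint of `f` bounds their total duration.
Both constructions preserve the makespan, so the two sets of makespans coincide.
-/

open Finset

section Durations

variable {α : Type*}

noncomputable def timeAt (L : List (α × ℝ)) (a : α) : ℝ :=
  (L.map fun seg => if seg.1 = a then seg.2 else 0).sum

lemma sum_mul_timeAt (S : Finset α) (g : α → ℝ) (L : List (α × ℝ)) :
    ∑ a ∈ S, g a * timeAt L a =
      (L.map fun seg => if seg.1 ∈ S then g seg.1 * seg.2 else 0).sum := by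
  induction L with
  | nil => simp [timeAt]
  | cons seg L ih =>
    simp only [timeAt, List.map_cons, List.sum_cons, mul_add, sum_add_distrib] at ih ⊢
    rw [ih]
    congr 1
    simp [mul_ite]

lemma timeAt_nonneg {L : List (α × ℝ)} (hdur : ∀ seg ∈ L, 0 ≤ seg.2) (a : α) :
    0 ≤ timeAt L a :=
  List.sum_nonneg fun _ hmem => by
    obtain ⟨seg, hseg, rfl⟩ := List.mem_map.1 hmem
    split_ifs
    exacts [hdur seg hseg, le_rfl]

lemma sum_duration_ite_le_max (p : α × ℝ → Prop) [DecidablePred p] (C : ℝ)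
    (L : List (α × ℝ)) (hdur : ∀ seg ∈ L, 0 ≤ seg.2)
    (hfinish : ∀ k : Fin L.length, p (L.get k) → ((L.take (k + 1)).map Prod.snd).sum ≤ C) :
    (L.map fun seg => if p seg then seg.2 else 0).sum ≤ max C 0 := by
  induction L generalizing C with
  | nil => simp
  | cons seg L ih =>
    have hseg : 0 ≤ seg.2 := hdur seg List.mem_cons_self
    have hrest := ih (C - seg.2) (fun s hs => hdur s (List.mem_cons_of_mem _ hs)) fun k hk => by
      have := hfinish k.succ (by simpa using hk)
      simp only [Fin.val_succ, List.take_succ_cons, List.map_cons, List.sum_cons] at this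
      linarith
    simp only [List.map_cons, List.sum_cons]
    split_ifs with hp
    · have hC : seg.2 ≤ C := by simpa using hfinish 0 (by simpa using hp)
      have : max (C - seg.2) 0 = C - seg.2 := max_eq_left (by linarith)
      rw [this] at hrest
      exact le_max_of_le_left (by linarith)
    · have : max (C - seg.2) 0 ≤ max C 0 := max_le_max (by linarith) le_rfl
      linarith

lemma sum_mul_timeAt_of_forall_mem {S : Finset α} {L : List (α × ℝ)}
    (hmem : ∀ seg ∈ L, seg.1 ∈ S) (g : α → ℝ) :
    ∑ a ∈ S, g a * timeAt L a = (L.map fun seg => g seg.1 * seg.2).sum := by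
  rw [sum_mul_timeAt]
  exact congrArg List.sum (List.map_congr_left fun seg hseg => if_pos (hmem seg hseg))

end Durations

section ScheduleToMP

variable {F : ℕ} {s t : Fin F → ℝ} {𝒱 : Finset (Fin F → ℝ)}
  {L : List ((Fin F → ℝ) × ℝ)}

lemma mpFeasible_timeAt (ht : ∀ f, 0 ≤ t f) (hmono : Monotone t)
    (hnn : ∀ v ∈ 𝒱, ∀ f, 0 ≤ v f) (hL : FeasibleSchedule s t L)
    (hmem : ∀ seg ∈ L, seg.1 ∈ 𝒱) : MPFeasible s t 𝒱 (timeAt L) := by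
  obtain ⟨hsched, hflow⟩ := hL
  have hdur : ∀ seg ∈ L, 0 ≤ seg.2 := fun seg hseg => (hsched seg hseg).2
  refine ⟨fun v _ => timeAt_nonneg hdur v, fun f => ?_, fun f => ?_⟩
  · rw [sum_filter_of_ne, sum_mul_timeAt_of_forall_mem hmem, (hflow f).1]
    intro v hv hne
    exact (hnn v hv f).lt_of_ne fun h => hne (by rw [← h, zero_mul])
  · calc ∑ v ∈ 𝒱.filter (fun v => ∃ i ≤ f, 0 < v i), timeAt L v
        = (L.map fun seg =>
            if seg.1 ∈ 𝒱.filter (fun v => ∃ i ≤ f, 0 < v i) then seg.2 else 0).sum := by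
          simpa using sum_mul_timeAt (𝒱.filter (fun v => ∃ i ≤ f, 0 < v i)) 1 L
      _ ≤ max (t f) 0 := by
          refine sum_duration_ite_le_max _ _ L hdur fun k hk => ?_
          obtain ⟨-, i, hif, hpos⟩ := mem_filter.1 hk
          exact ((hflow i).2 k hpos).trans (hmono hif)
      _ = t f := max_eq_left (ht f)

lemma sum_timeAt_eq_makespan (hmem : ∀ seg ∈ L, seg.1 ∈ 𝒱) :
    ∑ v ∈ 𝒱, timeAt L v = (L.map Prod.snd).sum := by
  simpa using sum_mul_timeAt_of_forall_mem hmem 1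

end ScheduleToMP

lemma Finset.exists_nodup_toFinset_pairwise {α β : Type*} [DecidableEq α] [LinearOrder β]
    (S : Finset α) (key : α → β) :
    ∃ l : List α, l.Nodup ∧ l.toFinset = S ∧ l.Pairwise fun a b => key a ≤ key b := by
  have hperm := List.mergeSort_perm S.toList fun a b => decide (key a ≤ key b)
  refine ⟨_, hperm.nodup_iff.2 S.nodup_toList, ?_, ?_⟩
  · ext a
    simp [hperm.mem_iff]
  · simpa using List.pairwise_mergeSort (le := fun a b => decide (key a ≤ key b))
      (fun a b c hab hbc => by simp only [decide_eq_true_eq] at *; exact hab.trans hbc)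
      (fun a b => by simpa using le_total (key a) (key b)) S.toList

lemma List.Pairwise.rel_getElem_of_mem_take_succ_s2 {α : Type*} {R : α → α → Prop}
    (hR : ∀ a, R a a) {l : List α} (hl : l.Pairwise R) {k : ℕ} (hk : k < l.length) {a : α}
    (ha : a ∈ l.take (k + 1)) : R a l[k] := by
  obtain ⟨j, hj, rfl⟩ := List.mem_take_iff_getElem.1 ha
  rcases (Nat.lt_succ_iff.1 (lt_of_lt_of_le hj (min_le_left _ _))).lt_or_eq with hjk | rfl
  · exact List.pairwise_iff_getElem.1 hl j k _ hk hjk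
  · exact hR _

section MPToSchedule

variable {F : ℕ} {s t : Fin F → ℝ} {𝒱 : Finset (Fin F → ℝ)}
  {x : (Fin F → ℝ) → ℝ}

/-- `⊤` when `v` serves no flow, so that zero vectors are scheduled last. -/
noncomputable def firstFlow (v : Fin F → ℝ) : WithTop (Fin F) :=
  (univ.filter fun i => 0 < v i).min

lemma firstFlow_le_iff {v : Fin F → ℝ} {f : Fin F} :
    firstFlow v ≤ f ↔ ∃ i ≤ f, 0 < v i := by
  simp [firstFlow, Finset.min, Finset.inf_le_iff (WithTop.coe_lt_top f), and_comm]

lemma feasibleSchedule_map_of_pairwise_firstFlow (hnn : ∀ v ∈ 𝒱, ∀ f, 0 ≤ v f)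
    (hx : MPFeasible s t 𝒱 x) {l : List (Fin F → ℝ)} (hnodup : l.Nodup)
    (hl : l.toFinset = 𝒱)
    (hsorted : l.Pairwise fun v w => firstFlow v ≤ firstFlow w) :
    FeasibleSchedule s t (l.map fun v => (v, x v)) := by
  obtain ⟨hx0, hdeliver, hdeadline⟩ := hx
  have hmem : ∀ v ∈ l, v ∈ 𝒱 := fun v hv => hl ▸ List.mem_toFinset.2 hv
  refine ⟨?_, fun f => ⟨?_, fun k hk => ?_⟩⟩
  · simp only [IsSchedule, List.mem_map]
    rintro _ ⟨v, hv, rfl⟩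
    exact ⟨hnn v (hmem v hv), hx0 v (hmem v hv)⟩
  · rw [List.map_map, ← hdeliver f, sum_filter_of_ne]
    · rw [← hl, List.sum_toFinset _ hnodup]
      rfl
    · intro v hv hne
      exact (hnn v hv f).lt_of_ne fun h => hne (by rw [← h, zero_mul])
  · have hk' : (k : ℕ) < l.length := by simpa using k.isLt
    have hpos : 0 < l[(k : ℕ)] f := by simpa using hk
    have hsub : (l.take (k + 1)).toFinset ⊆ 𝒱.filter fun v => ∃ i ≤ f, 0 < v i := by
      intro w hw
      rw [List.mem_toFinset] at hw
      refine mem_filter.2 ⟨hmem w (List.mem_of_mem_take hw), firstFlow_le_iff.1 ?_⟩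
      exact le_trans
        (hsorted.rel_getElem_of_mem_take_succ_s2 (fun v => le_refl (firstFlow v)) hk' hw)
        (firstFlow_le_iff.2 ⟨f, le_rfl, hpos⟩)
    calc ((List.take (k + 1) (l.map fun v => (v, x v))).map Prod.snd).sum
        = ∑ w ∈ (l.take (k + 1)).toFinset, x w := by
          rw [← List.map_take, List.map_map,
            List.sum_toFinset x ((List.take_sublist _ _).nodup hnodup)]
          rfl
      _ ≤ ∑ w ∈ 𝒱.filter fun v => ∃ i ≤ f, 0 < v i, x w :=
          sum_le_sum_of_subset_of_nonneg hsub fun w hw _ => hx0 w (mem_filter.1 hw).1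
      _ ≤ t f := hdeadline f

lemma exists_feasibleSchedule_of_mpFeasible (hnn : ∀ v ∈ 𝒱, ∀ f, 0 ≤ v f)
    (hx : MPFeasible s t 𝒱 x) :
    ∃ L : List ((Fin F → ℝ) × ℝ), (FeasibleSchedule s t L ∧ ∀ seg ∈ L, seg.1 ∈ 𝒱) ∧
      (L.map Prod.snd).sum = ∑ v ∈ 𝒱, x v := by
  obtain ⟨l, hnodup, hl, hsorted⟩ := 𝒱.exists_nodup_toFinset_pairwise firstFlow
  refine ⟨l.map fun v => (v, x v),
    ⟨feasibleSchedule_map_of_pairwise_firstFlow hnn hx hnodup hl hsorted, ?_⟩, ?_⟩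
  · simp only [List.mem_map]
    rintro _ ⟨v, hv, rfl⟩
    exact hl ▸ List.mem_toFinset.2 hv
  · rw [List.map_map, ← hl, List.sum_toFinset x hnodup]
    rfl

end MPToSchedule

theorem mp_equiv_schedules_general {F : ℕ}
    (s t : Fin F → ℝ) (ht : ∀ f, 0 < t f)
    (hmono : Monotone t)
    (𝒱 : Finset (Fin F → ℝ))
    (hnn : ∀ v ∈ 𝒱, ∀ f, 0 ≤ v f) :
    ((∃ L : List ((Fin F → ℝ) × ℝ),
        FeasibleSchedule s t L ∧ ∀ seg ∈ L, seg.1 ∈ 𝒱) ↔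
      (∃ x : (Fin F → ℝ) → ℝ, MPFeasible s t 𝒱 x)) ∧
    ((∃ L : List ((Fin F → ℝ) × ℝ),
        FeasibleSchedule s t L ∧ ∀ seg ∈ L, seg.1 ∈ 𝒱) →
      sInf {m : ℝ | ∃ L : List ((Fin F → ℝ) × ℝ),
          (FeasibleSchedule s t L ∧ ∀ seg ∈ L, seg.1 ∈ 𝒱) ∧
          (L.map Prod.snd).sum = m} =
      sInf {m : ℝ | ∃ x : (Fin F → ℝ) → ℝ,
          MPFeasible s t 𝒱 x ∧ ∑ v ∈ 𝒱, x v = m}) := by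
  have of_schedule : ∀ L : List ((Fin F → ℝ) × ℝ),
      FeasibleSchedule s t L ∧ (∀ seg ∈ L, seg.1 ∈ 𝒱) →
        MPFeasible s t 𝒱 (timeAt L) ∧ ∑ v ∈ 𝒱, timeAt L v = (L.map Prod.snd).sum :=
    fun L hL => ⟨mpFeasible_timeAt (fun f => (ht f).le) hmono hnn hL.1 hL.2,
      sum_timeAt_eq_makespan hL.2⟩
  refine ⟨⟨fun ⟨L, hL⟩ => ⟨timeAt L, (of_schedule L hL).1⟩, fun ⟨x, hx⟩ => ?_⟩, fun _ => ?_⟩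
  · obtain ⟨L, hL, -⟩ := exists_feasibleSchedule_of_mpFeasible hnn hx
    exact ⟨L, hL⟩
  · congr 1
    ext m
    constructor
    · rintro ⟨L, hL, rfl⟩
      exact ⟨timeAt L, of_schedule L hL⟩
    · rintro ⟨x, hx, rfl⟩
      exact exists_feasibleSchedule_of_mpFeasible hnn hx

/-- a feasible schedule using rate vectors from `𝒱` exists iff an
MP-feasible `x` exists; moreover, when they exist, the minimum makespan over feasible
schedules using vectors from `𝒱` equals the minimum of `∑_{v ∈ 𝒱} x v` over
MP-feasible `x`. -/
theorem mp_equiv_schedules {F : ℕ} (hF : 1 ≤ F)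
    (s t : Fin F → ℝ) (hs : ∀ f, 0 < s f) (ht : ∀ f, 0 < t f)
    (hmono : Monotone t)
    (𝒱 : Finset (Fin F → ℝ)) (h𝒱 : 𝒱.Nonempty)
    (hnn : ∀ v ∈ 𝒱, ∀ f, 0 ≤ v f) (hpos : ∀ v ∈ 𝒱, ∃ f, 0 < v f) :
    ((∃ L : List ((Fin F → ℝ) × ℝ),
        FeasibleSchedule s t L ∧ ∀ seg ∈ L, seg.1 ∈ 𝒱) ↔
      (∃ x : (Fin F → ℝ) → ℝ, MPFeasible s t 𝒱 x)) ∧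
    ((∃ L : List ((Fin F → ℝ) × ℝ),
        FeasibleSchedule s t L ∧ ∀ seg ∈ L, seg.1 ∈ 𝒱) →
      sInf {m : ℝ | ∃ L : List ((Fin F → ℝ) × ℝ),
          (FeasibleSchedule s t L ∧ ∀ seg ∈ L, seg.1 ∈ 𝒱) ∧
          (L.map Prod.snd).sum = m} =
      sInf {m : ℝ | ∃ x : (Fin F → ℝ) → ℝ,
          MPFeasible s t 𝒱 x ∧ ∑ v ∈ 𝒱, x v = m}) :=
  mp_equiv_schedules_general s t ht hmono 𝒱 hnn
end

section
/- Let f⁺ ∈ Fin F and suppose r* minimizes g over S_{f⁺}, r* is not identically zero, and let f⁺⁺ be the least index with r* f⁺⁺ > 0 (so f⁺⁺ ≥ f⁺). Then for every m with f⁺ ≤ m ≤ f⁺⁺: r* ∈ S_m, r* minimizes g over S_m, and the minimum of g over S_m equals the minimum of g over S_{f⁺}, namely g(r*). Consequently the subproblems S_{f⁺+1}, …, S_{f⁺⁺} can be discarded without loss of optimality. -/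
/-!
Feasibility of `r*` for `S_m` only needs that `r*` vanishes below `m`: it is nonnegative and
its first positive coordinate is `f⁺⁺ ≥ m`. Optimality is inherited because the sets `S_m`
shrink as `m` grows, so `S_m ⊆ S_{f⁺}` and `r*` already beats every point of `S_m`.
-/

theorem IsMinOn.isLeast_image {α β : Type*} [Preorder β] {f : α → β} {s : Set α} {a : α}
    (hf : IsMinOn f s a) (ha : a ∈ s) : IsLeast (f '' s) (f a) :=
  ⟨Set.mem_image_of_mem f ha, Set.forall_mem_image.2 hf⟩

section VanishingBelow

variable {ι β : Type*} [LinearOrder ι] [Zero β] {C : Set (ι → β)}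
  {r : ι → β} {m j : ι}

def vanishingBelow (C : Set (ι → β)) (m : ι) : Set (ι → β) :=
  {r ∈ C | ∀ i, i < m → r i = 0}

theorem vanishingBelow_antitone (C : Set (ι → β)) : Antitone (vanishingBelow C) :=
  fun _ _ hmn _ hr => ⟨hr.1, fun i hi => hr.2 i (hi.trans_le hmn)⟩

theorem le_of_mem_vanishingBelow (hr : r ∈ vanishingBelow C m) (hj : r j ≠ 0) : m ≤ j :=
  not_lt.1 fun hjm => hj (hr.2 j hjm)

theorem mem_vanishingBelow_of_nonneg [PartialOrder β] (hrC : r ∈ C) (hr : 0 ≤ r)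
    (hj : ∀ i, 0 < r i → j ≤ i) : r ∈ vanishingBelow C j :=
  ⟨hrC, fun i hi => ((hr i).lt_or_eq.resolve_left fun hpos => (hj i hpos).not_gt hi).symm⟩

end VanishingBelow

theorem subproblem_skipping_general {F : ℕ}
    (C : Set (Fin F → ℝ)) (hC : ∀ r ∈ C, ∀ i, 0 ≤ r i)
    (S : Fin F → Set (Fin F → ℝ))
    (hS : ∀ m : Fin F, S m = {r ∈ C | ∀ i : Fin F, i < m → r i = 0})
    (g : (Fin F → ℝ) → ℝ)
    (fp : Fin F) (rstar : Fin F → ℝ)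
    (hmem : rstar ∈ S fp) (hmin : ∀ r ∈ S fp, g rstar ≤ g r)
    (fpp : Fin F)
    (hfpp : 0 < rstar fpp ∧ ∀ i : Fin F, 0 < rstar i → fpp ≤ i) :
    fp ≤ fpp ∧
    ∀ m : Fin F, fp ≤ m → m ≤ fpp →
      rstar ∈ S m ∧ (∀ r ∈ S m, g rstar ≤ g r) ∧
      IsLeast (g '' S m) (g rstar) ∧
      IsLeast (g '' S fp) (g rstar) := by
  obtain rfl : S = vanishingBelow C := funext hS
  obtain ⟨hpos, hfirst⟩ := hfpp
  have hmin : IsMinOn g (vanishingBelow C fp) rstar := isMinOn_iff.2 hmin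
  have hmem_fpp : rstar ∈ vanishingBelow C fpp :=
    mem_vanishingBelow_of_nonneg hmem.1 (hC rstar hmem.1) hfirst
  refine ⟨le_of_mem_vanishingBelow hmem hpos.ne', fun m hfm hmf => ?_⟩
  have hmem_m : rstar ∈ vanishingBelow C m := vanishingBelow_antitone C hmf hmem_fpp
  have hmin_m : IsMinOn g (vanishingBelow C m) rstar :=
    hmin.on_subset (vanishingBelow_antitone C hfm)
  exact ⟨hmem_m, isMinOn_iff.1 hmin_m, hmin_m.isLeast_image hmem_m,
    hmin.isLeast_image hmem⟩

/-- if `r*` minimizes the reduced-cost objective `g` over the restricted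
set `S_{f⁺}` and `f⁺⁺` is the least flow index with positive rate in `r*`, then for
every `m` with `f⁺ ≤ m ≤ f⁺⁺`, `r*` belongs to and minimizes `g` over `S_m`, and the
minimum of `g` over `S_m` equals the minimum of `g` over `S_{f⁺}`, namely `g r*`.
Hence the subproblems `S_{f⁺+1}, …, S_{f⁺⁺}` can be discarded. -/
theorem subproblem_skipping {F : ℕ} (hF : 1 ≤ F)
    (C : Set (Fin F → ℝ)) (hC : ∀ r ∈ C, ∀ i, 0 ≤ r i)
    (lam : Fin F → ℝ)
    (S : Fin F → Set (Fin F → ℝ))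
    (hS : ∀ m : Fin F, S m = {r ∈ C | ∀ i : Fin F, i < m → r i = 0})
    (g : (Fin F → ℝ) → ℝ)
    (hg : ∀ r, g r = 1 - ∑ f : Fin F, lam f * r f)
    (fp : Fin F) (rstar : Fin F → ℝ)
    (hmem : rstar ∈ S fp) (hmin : ∀ r ∈ S fp, g rstar ≤ g r)
    (hne : rstar ≠ 0)
    (fpp : Fin F)
    (hfpp : 0 < rstar fpp ∧ ∀ i : Fin F, 0 < rstar i → fpp ≤ i) :
    fp ≤ fpp ∧
    ∀ m : Fin F, fp ≤ m → m ≤ fpp →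
      rstar ∈ S m ∧ (∀ r ∈ S m, g rstar ≤ g r) ∧
      IsLeast (g '' S m) (g rstar) ∧
      IsLeast (g '' S fp) (g rstar) :=
  subproblem_skipping_general C hC S hS g fp rstar hmem hmin fpp hfpp
end

section
/- If Σ_{i ≤ f} s i ≤ c · t f for every flow f, then the EDF sequential schedule is a feasible continuous schedule: for every flow f, ∫₀^{t f} of flow f's rate function equals s f, and all flows are completed by time (Σ_{f} s f)/c. -/
open scoped Classical BigOperators
open MeasureTheory

/-! The EDF service windows `[P (f-1), P f)` are pairwise disjoint, so at any time at most one
flow transmits, at rate `c`. Flow `f` thus receives `c · (P f - P (f-1)) = s f`, all of it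
inside `[0, P f] ⊆ [0, t f]` by the hypothesis `c · P f ≤ c · t f`. -/

/-- A continuous schedule on a single link of capacity `c`: measurable nonnegative
rate functions whose sum never exceeds `c` at any time `τ ≥ 0`. -/
def ContSched (F : ℕ) (c : ℝ) (ρ : Fin F → ℝ → ℝ) : Prop :=
  (∀ f, Measurable (ρ f)) ∧ (∀ f τ, 0 ≤ ρ f τ) ∧
  (∀ τ : ℝ, 0 ≤ τ → ∑ f : Fin F, ρ f τ ≤ c)

/-- The EDF (earliest-deadline-first) sequential schedule: flow `f` is transmitted
alone at full rate `c` on the interval `[P (f-1), P f)`, where `P f = (∑_{i ≤ f} s i)/c`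
are the prefix sums, and at rate `0` elsewhere. -/
noncomputable def edf (F : ℕ) (s : Fin F → ℝ) (c : ℝ) : Fin F → ℝ → ℝ :=
  fun f τ =>
    if (∑ i ∈ Finset.Iio f, s i) / c ≤ τ ∧ τ < (∑ i ∈ Finset.Iic f, s i) / c
    then c else 0

theorem intervalIntegral_indicator_Ico_const {u a b t : ℝ} (c : ℝ) (ha : u ≤ a)
    (hab : a ≤ b) (hb : b ≤ t) :
    ∫ τ in u..t, (Set.Ico a b).indicator (fun _ => c) τ = (b - a) * c := by
  rw [intervalIntegral.integral_of_le (ha.trans (hab.trans hb)),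
    setIntegral_congr_set Ioc_ae_eq_Icc, setIntegral_indicator measurableSet_Ico,
    Set.inter_eq_right.mpr (Set.Ico_subset_Icc_self.trans (Set.Icc_subset_Icc ha hb)),
    setIntegral_const, Real.volume_real_Ico_of_le hab, smul_eq_mul]

def edfWindow {F : ℕ} (s : Fin F → ℝ) (c : ℝ) (f : Fin F) : Set ℝ :=
  Set.Ico ((∑ i ∈ Finset.Iio f, s i) / c) ((∑ i ∈ Finset.Iic f, s i) / c)

section EDF

variable {F : ℕ} {s : Fin F → ℝ} {c : ℝ}

theorem edf_eq_indicator (f : Fin F) :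
    edf F s c f = (edfWindow s c f).indicator fun _ => c := by
  ext τ
  simp only [edf, edfWindow, Set.indicator, Set.mem_Ico]

theorem measurable_edf (f : Fin F) : Measurable (edf F s c f) := by
  rw [edf_eq_indicator]
  exact measurable_const.indicator measurableSet_Ico

theorem edf_nonneg (hc : 0 ≤ c) (f : Fin F) (τ : ℝ) : 0 ≤ edf F s c f τ := by
  rw [edf_eq_indicator]
  exact Set.indicator_nonneg (fun _ _ => hc) τ

open Function in
theorem pairwise_disjoint_edfWindow (hs : ∀ f, 0 ≤ s f) (hc : 0 ≤ c) :
    Pairwise (Disjoint on edfWindow s c) := by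
  refine (pairwise_disjoint_on _).mpr fun f g hfg => ?_
  have hPfg : (∑ i ∈ Finset.Iic f, s i) / c ≤ (∑ i ∈ Finset.Iio g, s i) / c :=
    div_le_div_of_nonneg_right (Finset.sum_le_sum_of_subset_of_nonneg
      (fun i hi => Finset.mem_Iio.mpr ((Finset.mem_Iic.mp hi).trans_lt hfg))
      fun i _ _ => hs i) hc
  exact Set.disjoint_left.mpr fun τ hτf hτg => (hτf.2.trans_le hPfg).not_ge hτg.1

theorem sum_edf_le (hs : ∀ f, 0 ≤ s f) (hc : 0 ≤ c) (τ : ℝ) :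
    ∑ f : Fin F, edf F s c f τ ≤ c := by
  simp only [edf_eq_indicator]
  rw [← Finset.indicator_biUnion_apply _ _
    ((pairwise_disjoint_edfWindow hs hc).set_pairwise _)]
  exact Set.indicator_apply_le' (fun _ => le_rfl) fun _ => hc

theorem edf_eq_zero_of_total_le (hs : ∀ f, 0 ≤ s f) (hc : 0 ≤ c) (f : Fin F) {τ : ℝ}
    (hτ : (∑ i, s i) / c ≤ τ) : edf F s c f τ = 0 := by
  have hPf : (∑ i ∈ Finset.Iic f, s i) / c ≤ (∑ i, s i) / c :=
    div_le_div_of_nonneg_right (Finset.sum_le_univ_sum_of_nonneg hs) hc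
  rw [edf_eq_indicator]
  exact Set.indicator_of_notMem (fun hτf => (hτf.2.trans_le hPf).not_ge hτ) _

theorem integral_edf (hs : ∀ f, 0 ≤ s f) (hc : 0 < c) {f : Fin F} {t : ℝ}
    (hfit : ∑ i ∈ Finset.Iic f, s i ≤ c * t) :
    ∫ τ in (0:ℝ)..t, edf F s c f τ = s f := by
  have hIic : ∑ i ∈ Finset.Iic f, s i = ∑ i ∈ Finset.Iio f, s i + s f :=
    (Finset.sum_Iio_add_eq_sum_Iic f).symm
  rw [edf_eq_indicator, edfWindow, intervalIntegral_indicator_Ico_const c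
    (div_nonneg (Finset.sum_nonneg fun i _ => hs i) hc.le)
    (div_le_div_of_nonneg_right (by linarith [hs f]) hc.le)
    ((div_le_iff₀ hc).mpr (by linarith)), hIic]
  field_simp
  ring

end EDF

theorem edf_feasible_general {F : ℕ}
    (s t : Fin F → ℝ) (hs : ∀ f, 0 < s f) (c : ℝ) (hc : 0 < c)
    (hfit : ∀ f : Fin F, ∑ i ∈ Finset.Iic f, s i ≤ c * t f) :
    ContSched F c (edf F s c) ∧
    (∀ f : Fin F, (∫ τ in (0:ℝ)..(t f), edf F s c f τ) = s f) ∧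
    (∀ f : Fin F, ∀ τ : ℝ, (∑ i : Fin F, s i) / c ≤ τ → edf F s c f τ = 0) := by
  have hs₀ : ∀ f, 0 ≤ s f := fun f => (hs f).le
  exact ⟨⟨measurable_edf, edf_nonneg hc.le, fun τ _ => sum_edf_le hs₀ hc.le τ⟩,
    fun f => integral_edf hs₀ hc (hfit f), fun f _ => edf_eq_zero_of_total_le hs₀ hc.le f⟩

/-- if `∑_{i ≤ f} s i ≤ c * t f` for every flow `f`, then the EDF
sequential schedule is a feasible continuous schedule, and all flows are completed
by time `(∑ f s f)/c`. -/
theorem edf_feasible {F : ℕ} (hF : 1 ≤ F)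
    (s t : Fin F → ℝ) (hs : ∀ f, 0 < s f) (ht : ∀ f, 0 < t f)
    (hmono : Monotone t) (c : ℝ) (hc : 0 < c)
    (hfit : ∀ f : Fin F, ∑ i ∈ Finset.Iic f, s i ≤ c * t f) :
    ContSched F c (edf F s c) ∧
    (∀ f : Fin F, (∫ τ in (0:ℝ)..(t f), edf F s c f τ) = s f) ∧
    (∀ f : Fin F, ∀ τ : ℝ, (∑ i : Fin F, s i) / c ≤ τ → edf F s c f τ = 0) :=
  edf_feasible_general s t hs c hc hfit
end

section
/- A feasible continuous schedule exists if and only if Σ_{i ≤ f} s i ≤ c · t f for every flow f. -/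
open scoped Classical BigOperators
open MeasureTheory

/-- A continuous schedule is feasible if each flow's entire demand is delivered
by its deadline. -/
def FeasCont (F : ℕ) (s t : Fin F → ℝ) (c : ℝ) (ρ : Fin F → ℝ → ℝ) : Prop :=
  ContSched F c ρ ∧ ∀ f, (∫ τ in (0:ℝ)..(t f), ρ f τ) = s f

/-!
Necessity: the flows whose deadlines are at most `t f` must all be delivered inside `[0, t f]`,
where the link carries at most `c * t f` units of data.
Sufficiency: earliest-deadline-first sends the flows one after another at the full rate `c`,
so flow `f` finishes at `(∑_{i ≤ f} s i) / c`, which by hypothesis is at most `t f`.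
-/

open Finset Function

section Necessity

variable {F : ℕ} {c : ℝ} {ρ : Fin F → ℝ → ℝ}

theorem ContSched.sum_le (hρ : ContSched F c ρ) (S : Finset (Fin F)) {τ : ℝ} (hτ : 0 ≤ τ) :
    ∑ i ∈ S, ρ i τ ≤ c :=
  (sum_le_sum_of_subset_of_nonneg (subset_univ S) fun i _ _ => hρ.2.1 i τ).trans (hρ.2.2 τ hτ)

theorem ContSched.le (hρ : ContSched F c ρ) (i : Fin F) {τ : ℝ} (hτ : 0 ≤ τ) : ρ i τ ≤ c := by
  simpa using hρ.sum_le {i} hτ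

theorem ContSched.intervalIntegrable (hρ : ContSched F c ρ) (i : Fin F) {x : ℝ} (hx : 0 ≤ x) :
    IntervalIntegrable (ρ i) volume 0 x := by
  refine (intervalIntegrable_const (c := c)).mono_fun' (hρ.1 i).aestronglyMeasurable ?_
  rw [Set.uIoc_of_le hx]
  filter_upwards [ae_restrict_mem measurableSet_Ioc] with τ hτ
  rw [Real.norm_of_nonneg (hρ.2.1 i τ)]
  exact hρ.le i hτ.1.le

theorem ContSched.integral_sum_le (hρ : ContSched F c ρ) (S : Finset (Fin F)) {x : ℝ}
    (hx : 0 ≤ x) : ∫ τ in 0..x, ∑ i ∈ S, ρ i τ ≤ c * x :=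
  calc ∫ τ in 0..x, ∑ i ∈ S, ρ i τ ≤ ∫ _ in 0..x, c :=
        intervalIntegral.integral_mono_on hx
          (by simpa only [sum_fn] using IntervalIntegrable.sum S fun i _ =>
            hρ.intervalIntegrable i hx)
          intervalIntegrable_const fun τ hτ => hρ.sum_le S hτ.1
    _ = c * x := by simp [mul_comm]

theorem FeasCont.sum_le_mul {s t : Fin F → ℝ} (hρ : FeasCont F s t c ρ) (S : Finset (Fin F))
    {x : ℝ} (hx : 0 ≤ x) (ht : ∀ i ∈ S, 0 ≤ t i ∧ t i ≤ x) : ∑ i ∈ S, s i ≤ c * x :=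
  calc ∑ i ∈ S, s i = ∑ i ∈ S, ∫ τ in 0..t i, ρ i τ := sum_congr rfl fun i _ => (hρ.2 i).symm
    _ ≤ ∑ i ∈ S, ∫ τ in 0..x, ρ i τ := sum_le_sum fun i hi =>
        intervalIntegral.integral_mono_interval le_rfl (ht i hi).1 (ht i hi).2
          (ae_of_all _ (hρ.1.2.1 i)) (hρ.1.intervalIntegrable i hx)
    _ = ∫ τ in 0..x, ∑ i ∈ S, ρ i τ :=
        (intervalIntegral.integral_finsetSum fun i _ => hρ.1.intervalIntegrable i hx).symm
    _ ≤ c * x := hρ.1.integral_sum_le S hx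

end Necessity

section EarliestDeadlineFirst

variable {ι : Type*} [LinearOrder ι] [LocallyFiniteOrderBot ι] {s : ι → ℝ} {c : ℝ}

variable (s c) in
/-- The time slot in which earliest-deadline-first transmits flow `f`, at the full rate `c`. -/
noncomputable def edfSlot (f : ι) : Set ℝ :=
  Set.Ioc ((∑ i ∈ Iio f, s i) / c) ((∑ i ∈ Iic f, s i) / c)

variable (s c) in
noncomputable def edfSchedule (f : ι) : ℝ → ℝ :=
  (edfSlot s c f).indicator fun _ => c

theorem measurableSet_edfSlot (f : ι) : MeasurableSet (edfSlot s c f) :=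
  measurableSet_Ioc

theorem pairwise_disjoint_edfSlot (hs : ∀ i, 0 ≤ s i) (hc : 0 ≤ c) :
    Pairwise (Disjoint on edfSlot s c) := by
  refine (pairwise_disjoint_on _).2 fun g f hgf => Set.Ioc_disjoint_Ioc_of_le ?_
  gcongr
  · exact fun i _ _ => hs i
  · exact fun i hi => mem_Iio.2 ((mem_Iic.1 hi).trans_lt hgf)

theorem sum_edfSchedule_le [Fintype ι] (hs : ∀ i, 0 ≤ s i) (hc : 0 ≤ c) (τ : ℝ) :
    ∑ f, edfSchedule s c f τ ≤ c := by
  unfold edfSchedule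
  rw [← indicator_biUnion_apply _ _ ((pairwise_disjoint_edfSlot hs hc).set_pairwise _)]
  exact Set.indicator_le_self' (fun _ _ => hc) τ

theorem integral_edfSchedule (hs : ∀ i, 0 ≤ s i) (hc : 0 < c) (f : ι) {x : ℝ}
    (hx : (∑ i ∈ Iic f, s i) / c ≤ x) : ∫ τ in 0..x, edfSchedule s c f τ = s f := by
  have hstart : 0 ≤ (∑ i ∈ Iio f, s i) / c := div_nonneg (sum_nonneg fun i _ => hs i) hc.le
  have hlen : (∑ i ∈ Iic f, s i) / c - (∑ i ∈ Iio f, s i) / c = s f / c := by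
    rw [← sum_Iio_add_eq_sum_Iic, add_div]; ring
  have hend : (∑ i ∈ Iio f, s i) / c ≤ (∑ i ∈ Iic f, s i) / c := by
    linarith [div_nonneg (hs f) hc.le]
  have hslot : edfSlot s c f ⊆ Set.Ioc 0 x := Set.Ioc_subset_Ioc hstart hx
  unfold edfSchedule
  rw [intervalIntegral.integral_of_le (hstart.trans (hend.trans hx)),
    setIntegral_indicator (measurableSet_edfSlot f),
    Set.inter_eq_right.2 hslot, setIntegral_const, edfSlot, Real.volume_real_Ioc_of_le hend, hlen, smul_eq_mul, div_mul_cancel₀ _ hc.ne']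

end EarliestDeadlineFirst

theorem contSched_edfSchedule {F : ℕ} {s : Fin F → ℝ} {c : ℝ} (hs : ∀ i, 0 ≤ s i) (hc : 0 ≤ c) :
    ContSched F c (edfSchedule s c) :=
  ⟨fun f => measurable_const.indicator (measurableSet_edfSlot f),
    fun _ _ => Set.indicator_nonneg (fun _ _ => hc) _, fun τ _ => sum_edfSchedule_le hs hc τ⟩

theorem feasibility_characterization_general {F : ℕ}
    (s t : Fin F → ℝ) (hs : ∀ f, 0 < s f) (ht : ∀ f, 0 < t f)
    (hmono : Monotone t) (c : ℝ) (hc : 0 < c) :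
    (∃ ρ : Fin F → ℝ → ℝ, FeasCont F s t c ρ) ↔
      ∀ f : Fin F, ∑ i ∈ Finset.Iic f, s i ≤ c * t f := by
  have hs' : ∀ f, 0 ≤ s f := fun f => (hs f).le
  constructor
  · rintro ⟨ρ, hρ⟩ f
    exact hρ.sum_le_mul (Iic f) (ht f).le fun i hi => ⟨(ht i).le, hmono (mem_Iic.1 hi)⟩
  · intro h
    exact ⟨edfSchedule s c, contSched_edfSchedule hs' hc.le,
      fun f => integral_edfSchedule hs' hc f ((div_le_iff₀' hc).2 (h f))⟩

/-- a feasible continuous schedule exists iff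
`∑_{i ≤ f} s i ≤ c * t f` for every flow `f`. -/
theorem feasibility_characterization {F : ℕ} (hF : 1 ≤ F)
    (s t : Fin F → ℝ) (hs : ∀ f, 0 < s f) (ht : ∀ f, 0 < t f)
    (hmono : Monotone t) (c : ℝ) (hc : 0 < c) :
    (∃ ρ : Fin F → ℝ → ℝ, FeasCont F s t c ρ) ↔
      ∀ f : Fin F, ∑ i ∈ Finset.Iic f, s i ≤ c * t f :=
  feasibility_characterization_general s t hs ht hmono c hc
end

section
/- Suppose a time-varying routing on [0,T] satisfies ∫₀^T r f (τ) dτ = s f for every flow f and additionally r f τ = 0 for almost every τ > t f, where t f ∈ (0,T] is the deadline of flow f. Let 0 = τ₀ < τ₁ < ⋯ < τ_K = T be slice boundaries such that every deadline t f equals some τ_k. For each slice k and each flow f and arc a, define ȳᵏ f a and r̄ᵏ f as the averages of y f a and r f over [τ_{k−1}, τ_k]. Then within every slice k the averaged rates satisfy the conservation equations (with end-to-end rate r̄ᵏ f) and the capacity constraints Σ_f ȳᵏ f a ≤ c a; moreover Σ_{k=1}^K (τ_k − τ_{k−1}) · r̄ᵏ f = s f for every flow f, and r̄ᵏ f = 0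 for every slice k with τ_{k−1} ≥ t f. Hence the averaged solution is feasible for the continuous-capacity time-sliced formulation for any such time slicing. -/
/-!
Averaging over a slice `[a, b]` is a positive linear functional. It therefore carries the
conservation equations, which are linear in `(y, r)` and hold at almost every time, and the
capacity bounds over to the slice averages. Weighting each average by the slice length gives back
the integral over the slice, so additivity of the integral over adjacent slices recovers the
demands, and a slice that starts after a deadline only sees times at which `r f` vanishes.
-/

open MeasureTheory
open scoped Interval

noncomputable def sliceAverage (a b : ℝ) (g : ℝ → ℝ) : ℝ :=
  1 / (b - a) * ∫ τ in a..b, g τ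

theorem sub_mul_sliceAverage {a b : ℝ} (hab : a ≠ b) (g : ℝ → ℝ) :
    (b - a) * sliceAverage a b g = ∫ τ in a..b, g τ := by
  have : b - a ≠ 0 := sub_ne_zero.2 hab.symm
  rw [sliceAverage, ← mul_assoc, mul_one_div_cancel this, one_mul]

theorem sliceAverage_eq_zero_of_ae {a b : ℝ} {g : ℝ → ℝ} (h : ∀ᵐ τ, τ ∈ Ι a b → g τ = 0) :
    sliceAverage a b g = 0 := by
  simp [sliceAverage, intervalIntegral.integral_congr_ae h]

theorem sum_integral_slices {K : ℕ} {τb : ℕ → ℝ} {g : ℝ → ℝ}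
    (hg : ∀ k ∈ Finset.Icc 1 K, IntervalIntegrable g volume (τb (k - 1)) (τb k)) :
    ∑ k ∈ Finset.Icc 1 K, ∫ τ in τb (k - 1)..τb k, g τ = ∫ τ in τb 0..τb K, g τ := by
  rw [← intervalIntegral.sum_integral_adjacent_intervals fun k hk => by
    simpa using hg (k + 1) (Finset.mem_Icc.2 ⟨le_add_self, hk⟩),
    ← Finset.Ico_add_one_right_eq_Icc, Finset.sum_Ico_eq_sum_range]
  simp [add_comm]

theorem slice_bounds {K : ℕ} {τb : ℕ → ℝ} (hτ : ∀ k l : ℕ, k < l → l ≤ K → τb k < τb l)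
    {k : ℕ} (hk : k ∈ Finset.Icc 1 K) : τb 0 ≤ τb (k - 1) ∧ τb (k - 1) < τb k ∧ τb k ≤ τb K := by
  have hmono : ∀ k l, k ≤ l → l ≤ K → τb k ≤ τb l := fun k l hkl hl =>
    hkl.eq_or_lt.elim (fun h => h ▸ le_rfl) fun h => (hτ k l h hl).le
  obtain ⟨hk1, hkK⟩ := Finset.mem_Icc.1 hk
  exact ⟨hmono _ _ (Nat.zero_le _) (by omega), hτ _ _ (by omega) hkK, hmono _ _ hkK le_rfl⟩

theorem sum_integral_le_of_ae_sum_le {ι : Type*} {s : Finset ι} {g : ι → ℝ → ℝ} {a b C : ℝ}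
    (hab : a ≤ b) (hg : ∀ i ∈ s, IntervalIntegrable (g i) volume a b)
    (h : ∀ᵐ τ, τ ∈ Ι a b → ∑ i ∈ s, g i τ ≤ C) :
    ∑ i ∈ s, ∫ τ in a..b, g i τ ≤ (b - a) * C := by
  rw [← intervalIntegral.integral_finsetSum hg, ← smul_eq_mul, ← intervalIntegral.integral_const,
    intervalIntegral.integral_of_le hab, intervalIntegral.integral_of_le hab]
  refine setIntegral_mono_ae_restrict (integrable_finsetSum s fun i hi => (hg i hi).1)
    (integrableOn_const measure_Ioc_lt_top.ne) ?_
  rw [Filter.EventuallyLE, ae_restrict_iff' measurableSet_Ioc]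
  simpa only [Set.uIoc_of_le hab] using h

section Routing

variable {V : Type*} {F : ℕ} (A : Finset (V × V))

def CapacityFeasible (c : V × V → ℝ) (y : Fin F → V × V → ℝ) : Prop :=
  ∀ e ∈ A, ∑ f, y f e ≤ c e

theorem CapacityFeasible.sliceAverage {c : V × V → ℝ} {a b : ℝ} (hab : a < b)
    {y : Fin F → V × V → ℝ → ℝ} (hy : ∀ f, ∀ e ∈ A, IntervalIntegrable (y f e) volume a b)
    (h : ∀ᵐ τ, τ ∈ Ι a b → CapacityFeasible A c (fun f e => y f e τ)) :
    CapacityFeasible A c (fun f e => sliceAverage a b (y f e)) := by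
  intro e he
  have hlen : 0 < b - a := sub_pos.2 hab
  calc _ = 1 / (b - a) * ∑ f, ∫ τ in a..b, y f e τ := (Finset.mul_sum _ _ _).symm
    _ ≤ 1 / (b - a) * ((b - a) * c e) := by
      gcongr
      exact sum_integral_le_of_ae_sum_le hab.le (fun f _ => hy f e he)
        (h.mono fun τ hτ hmem => hτ hmem e he)
    _ = c e := by field_simp

variable [DecidableEq V]

def FlowConservation (o d : Fin F → V) (y : Fin F → V × V → ℝ) (r : Fin F → ℝ) : Prop :=
  ∀ f i, (∑ e ∈ A.filter (fun e => e.1 = i), y f e) - (∑ e ∈ A.filter (fun e => e.2 = i), y f e) =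
    if i = o f then -(r f) else if i = d f then r f else 0

variable {A} {o d : Fin F → V}

theorem FlowConservation.const_mul {y : Fin F → V × V → ℝ} {r : Fin F → ℝ}
    (h : FlowConservation A o d y r) (κ : ℝ) :
    FlowConservation A o d (fun f e => κ * y f e) (fun f => κ * r f) := by
  intro f i
  simp only [← Finset.mul_sum, ← mul_sub, h f i]
  split_ifs <;> ring

theorem FlowConservation.integral {a b : ℝ} {y : Fin F → V × V → ℝ → ℝ} {r : Fin F → ℝ → ℝ}
    (hy : ∀ f, ∀ e ∈ A, IntervalIntegrable (y f e) volume a b)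
    (h : ∀ᵐ τ, τ ∈ Ι a b → FlowConservation A o d (fun f e => y f e τ) (fun f => r f τ)) :
    FlowConservation A o d (fun f e => ∫ τ in a..b, y f e τ) (fun f => ∫ τ in a..b, r f τ) := by
  intro f i
  have hyi : ∀ (p : V × V → Prop) [DecidablePred p], ∀ e ∈ A.filter p,
      IntervalIntegrable (y f e) volume a b :=
    fun p _ e he => hy f e (Finset.mem_filter.1 he).1
  have hsum : ∀ (p : V × V → Prop) [DecidablePred p],
      IntervalIntegrable (fun τ => ∑ e ∈ A.filter p, y f e τ) volume a b := fun p _ => by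
    simpa only [← Finset.sum_apply] using IntervalIntegrable.sum _ (hyi p)
  rw [← intervalIntegral.integral_finsetSum (hyi _), ← intervalIntegral.integral_finsetSum (hyi _),
    ← intervalIntegral.integral_sub (hsum _) (hsum _),
    intervalIntegral.integral_congr_ae (h.mono fun τ hτ hmem => hτ hmem f i)]
  split_ifs <;> simp [intervalIntegral.integral_neg]

theorem FlowConservation.sliceAverage {a b : ℝ} {y : Fin F → V × V → ℝ → ℝ} {r : Fin F → ℝ → ℝ}
    (hy : ∀ f, ∀ e ∈ A, IntervalIntegrable (y f e) volume a b)
    (h : ∀ᵐ τ, τ ∈ Ι a b → FlowConservation A o d (fun f e => y f e τ) (fun f => r f τ)) :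
    FlowConservation A o d (fun f e => sliceAverage a b (y f e)) (fun f => sliceAverage a b (r f)) :=
  (FlowConservation.integral hy h).const_mul _

end Routing

theorem averaged_routing_time_sliced_feasible_general
    {V : Type*} [DecidableEq V]
    (A : Finset (V × V)) (c : V × V → ℝ) {F : ℕ} (o d : Fin F → V) (s : Fin F → ℝ) (T : ℝ)
    -- deadlines
    (t : Fin F → ℝ)
    -- a time-varying routing on [0, T]
    (y : Fin F → V × V → ℝ → ℝ) (r : Fin F → ℝ → ℝ)
    (hyint : ∀ f : Fin F, ∀ a ∈ A, IntervalIntegrable (y f a) volume 0 T)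
    (hrint : ∀ f : Fin F, IntervalIntegrable (r f) volume 0 T)
    (hae : ∀ᵐ τ ∂volume, τ ∈ Set.Icc (0:ℝ) T →
      ((∀ f : Fin F, ∀ i : V,
          (∑ a ∈ A.filter (fun a => a.1 = i), y f a τ) -
          (∑ a ∈ A.filter (fun a => a.2 = i), y f a τ) =
            if i = o f then -(r f τ) else if i = d f then r f τ else 0) ∧
       (∀ a ∈ A, ∑ f : Fin F, y f a τ ≤ c a)))
    -- all demands are delivered, and nothing is sent after the deadline
    (hdem : ∀ f : Fin F, (∫ τ in (0:ℝ)..T, r f τ) = s f)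
    (hdl : ∀ f : Fin F, ∀ᵐ τ ∂volume, τ ∈ Set.Ioc (t f) T → r f τ = 0)
    -- slice boundaries 0 = τb 0 < τb 1 < ⋯ < τb K = T containing all deadlines
    (K : ℕ) (τb : ℕ → ℝ)
    (hτ0 : τb 0 = 0) (hτK : τb K = T)
    (hτmono : ∀ k l : ℕ, k < l → l ≤ K → τb k < τb l) :
    -- conservation within every slice, with the averaged end-to-end rate
    (∀ k ∈ Finset.Icc 1 K, ∀ f : Fin F, ∀ i : V,
      (∑ a ∈ A.filter (fun a => a.1 = i),
          (1 / (τb k - τb (k - 1))) * ∫ τ in (τb (k - 1))..(τb k), y f a τ) -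
      (∑ a ∈ A.filter (fun a => a.2 = i),
          (1 / (τb k - τb (k - 1))) * ∫ τ in (τb (k - 1))..(τb k), y f a τ) =
        if i = o f then
          -((1 / (τb k - τb (k - 1))) * ∫ τ in (τb (k - 1))..(τb k), r f τ)
        else if i = d f then
          (1 / (τb k - τb (k - 1))) * ∫ τ in (τb (k - 1))..(τb k), r f τ
        else 0) ∧
    -- capacity within every slice
    (∀ k ∈ Finset.Icc 1 K, ∀ a ∈ A,
      ∑ f : Fin F,
        ((1 / (τb k - τb (k - 1))) * ∫ τ in (τb (k - 1))..(τb k), y f a τ) ≤ c a) ∧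
    -- the sliced amounts sum to the demands
    (∀ f : Fin F,
      ∑ k ∈ Finset.Icc 1 K,
        (τb k - τb (k - 1)) *
          ((1 / (τb k - τb (k - 1))) * ∫ τ in (τb (k - 1))..(τb k), r f τ) = s f) ∧
    -- no end-to-end rate in slices starting at or after the deadline
    (∀ f : Fin F, ∀ k ∈ Finset.Icc 1 K, t f ≤ τb (k - 1) →
      (1 / (τb k - τb (k - 1))) * ∫ τ in (τb (k - 1))..(τb k), r f τ = 0):= by
  have hslice : ∀ k ∈ Finset.Icc 1 K, 0 ≤ τb (k - 1) ∧ τb (k - 1) < τb k ∧ τb k ≤ T :=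
    fun k hk => hτ0 ▸ hτK ▸ slice_bounds hτmono hk
  have hsub : ∀ k ∈ Finset.Icc 1 K, Set.uIcc (τb (k - 1)) (τb k) ⊆ Set.Icc 0 T := fun k hk =>
    have ⟨h0, hlt, hT⟩ := hslice k hk
    Set.uIcc_subset_Icc ⟨h0, hlt.le.trans hT⟩ ⟨h0.trans hlt.le, hT⟩
  have hy : ∀ k ∈ Finset.Icc 1 K, ∀ f, ∀ a ∈ A,
      IntervalIntegrable (y f a) volume (τb (k - 1)) (τb k) := fun k hk f a ha =>
    (hyint f a ha).mono_set ((hsub k hk).trans Set.Icc_subset_uIcc)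
  have hr : ∀ k ∈ Finset.Icc 1 K, ∀ f, IntervalIntegrable (r f) volume (τb (k - 1)) (τb k) :=
    fun k hk f => (hrint f).mono_set ((hsub k hk).trans Set.Icc_subset_uIcc)
  have hslice_ae : ∀ k ∈ Finset.Icc 1 K, ∀ᵐ τ, τ ∈ Ι (τb (k - 1)) (τb k) →
      FlowConservation A o d (fun f a => y f a τ) (fun f => r f τ) ∧
        CapacityFeasible A c (fun f a => y f a τ) := fun k hk =>
    hae.mono fun τ h hτ => h (hsub k hk (Set.uIoc_subset_uIcc hτ))
  refine ⟨fun k hk => ?_, fun k hk => ?_, fun f => ?_, fun f k hk htk => ?_⟩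
  · exact FlowConservation.sliceAverage (hy k hk) ((hslice_ae k hk).mono fun τ h hτ => (h hτ).1)
  · exact CapacityFeasible.sliceAverage A (hslice k hk).2.1 (hy k hk)
      ((hslice_ae k hk).mono fun τ h hτ => (h hτ).2)
  · calc ∑ k ∈ Finset.Icc 1 K, (τb k - τb (k - 1)) * sliceAverage (τb (k - 1)) (τb k) (r f)
        = ∑ k ∈ Finset.Icc 1 K, ∫ τ in τb (k - 1)..τb k, r f τ :=
          Finset.sum_congr rfl fun k hk => sub_mul_sliceAverage (hslice k hk).2.1.ne (r f)
      _ = s f := by rw [sum_integral_slices fun k hk => hr k hk f, hτ0, hτK, hdem]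
  · refine sliceAverage_eq_zero_of_ae ((hdl f).mono fun τ h hτ => h ?_)
    have ⟨_, hlt, hT⟩ := hslice k hk
    rw [Set.uIoc_of_le hlt.le] at hτ
    exact Set.Ioc_subset_Ioc htk hT hτ

/-- averaging a time-varying routing (respecting deadlines) over any
time slicing whose boundaries include all deadlines yields a feasible solution of
the continuous-capacity time-sliced formulation: within every slice the averaged
rates satisfy conservation and capacity, the sliced amounts sum to the demands, and
the averaged end-to-end rate vanishes on slices starting after the deadline. -/
theorem averaged_routing_time_sliced_feasible
    {V : Type*} [Fintype V] [DecidableEq V]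
    (A : Finset (V × V)) (c : V × V → ℝ) (hc : ∀ a ∈ A, 0 ≤ c a)
    {F : ℕ} (hF : 1 ≤ F)
    (o d : Fin F → V) (hod : ∀ f, o f ≠ d f)
    (s : Fin F → ℝ) (hs : ∀ f, 0 < s f)
    (T : ℝ) (hT : 0 < T)
    -- deadlines
    (t : Fin F → ℝ) (htpos : ∀ f, 0 < t f) (htT : ∀ f, t f ≤ T)
    -- a time-varying routing on [0, T]
    (y : Fin F → V × V → ℝ → ℝ) (r : Fin F → ℝ → ℝ)
    (hyint : ∀ f : Fin F, ∀ a ∈ A, IntervalIntegrable (y f a) volume 0 T)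
    (hrint : ∀ f : Fin F, IntervalIntegrable (r f) volume 0 T)
    (hynn : ∀ f a τ, 0 ≤ y f a τ) (hrnn : ∀ f τ, 0 ≤ r f τ)
    (hae : ∀ᵐ τ ∂volume, τ ∈ Set.Icc (0:ℝ) T →
      ((∀ f : Fin F, ∀ i : V,
          (∑ a ∈ A.filter (fun a => a.1 = i), y f a τ) -
          (∑ a ∈ A.filter (fun a => a.2 = i), y f a τ) =
            if i = o f then -(r f τ) else if i = d f then r f τ else 0) ∧
       (∀ a ∈ A, ∑ f : Fin F, y f a τ ≤ c a)))
    -- all demands are delivered, and nothing is sent after the deadline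
    (hdem : ∀ f : Fin F, (∫ τ in (0:ℝ)..T, r f τ) = s f)
    (hdl : ∀ f : Fin F, ∀ᵐ τ ∂volume, τ ∈ Set.Ioc (t f) T → r f τ = 0)
    -- slice boundaries 0 = τb 0 < τb 1 < ⋯ < τb K = T containing all deadlines
    (K : ℕ) (hK : 1 ≤ K) (τb : ℕ → ℝ)
    (hτ0 : τb 0 = 0) (hτK : τb K = T)
    (hτmono : ∀ k l : ℕ, k < l → l ≤ K → τb k < τb l)
    (hdeadslice : ∀ f : Fin F, ∃ k ≤ K, t f = τb k) :
    -- conservation within every slice, with the averaged end-to-end rate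
    (∀ k ∈ Finset.Icc 1 K, ∀ f : Fin F, ∀ i : V,
      (∑ a ∈ A.filter (fun a => a.1 = i),
          (1 / (τb k - τb (k - 1))) * ∫ τ in (τb (k - 1))..(τb k), y f a τ) -
      (∑ a ∈ A.filter (fun a => a.2 = i),
          (1 / (τb k - τb (k - 1))) * ∫ τ in (τb (k - 1))..(τb k), y f a τ) =
        if i = o f then
          -((1 / (τb k - τb (k - 1))) * ∫ τ in (τb (k - 1))..(τb k), r f τ)
        else if i = d f then
          (1 / (τb k - τb (k - 1))) * ∫ τ in (τb (k - 1))..(τb k), r f τ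
        else 0) ∧
    -- capacity within every slice
    (∀ k ∈ Finset.Icc 1 K, ∀ a ∈ A,
      ∑ f : Fin F,
        ((1 / (τb k - τb (k - 1))) * ∫ τ in (τb (k - 1))..(τb k), y f a τ) ≤ c a) ∧
    -- the sliced amounts sum to the demands
    (∀ f : Fin F,
      ∑ k ∈ Finset.Icc 1 K,
        (τb k - τb (k - 1)) *
          ((1 / (τb k - τb (k - 1))) * ∫ τ in (τb (k - 1))..(τb k), r f τ) = s f) ∧
    -- no end-to-end rate in slices starting at or after the deadline
    (∀ f : Fin F, ∀ k ∈ Finset.Icc 1 K, t f ≤ τb (k - 1) →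
      (1 / (τb k - τb (k - 1))) * ∫ τ in (τb (k - 1))..(τb k), r f τ = 0) :=
  averaged_routing_time_sliced_feasible_general A c o d s T t y r hyint hrint hae hdem hdl K τb hτ0
    hτK hτmono
end

section
/- Let (v₁, x₁), …, (vₙ, xₙ) be a feasible schedule and let p < q be segment indices such that there exists a flow f′ with v_q f′ > 0 and v_p i = 0 for every flow i ≤ f′. Then the schedule obtained by deleting segment p and reinserting it (with the same rate vector v_p and duration x_p) immediately after segment q is again feasible. -/
open scoped Classical BigOperators

/-!
Cut the schedule as `A, c, B, D`, where `c` is segment `p` and `B` ends with segment `q`.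
Moving `c` behind `B` permutes the segments, so total deliveries and nonnegativity are unchanged;
segments of `A` and `D` keep their completion times and those of `B` finish earlier. The moved
segment now completes exactly when segment `q` used to, which is within the deadline of the flow
`f'` served by `q`; every flow served by `c` comes after `f'`, so its deadline is no earlier.
-/

variable {α : Type*}

theorem List.eq_take_append_getElem_cons_drop (L : List α) {p q : ℕ} (hp : p < L.length)
    (hpq : p ≤ q) :
    L = L.take p ++ L[p] :: ((L.drop (p + 1)).take (q - p) ++ L.drop (q + 1)) := by
  rw [show L.drop (q + 1) = (L.drop (p + 1)).drop (q - p) by rw [List.drop_drop]; congr 1; omega,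
    List.take_append_drop, List.getElem_cons_drop, List.take_append_drop]

theorem List.take_succ_eq_take_append_getElem_cons (L : List α) {p q : ℕ} (hp : p < L.length)
    (hpq : p ≤ q) :
    L.take (q + 1) = L.take p ++ L[p] :: (L.drop (p + 1)).take (q - p) := by
  conv_lhs => rw [← List.take_append_drop p L, ← List.getElem_cons_drop hp]
  rw [List.take_append, List.take_of_length_le (by simp; omega), List.length_take,
    min_eq_left hp.le, show q + 1 - p = q - p + 1 by omega, List.take_succ_cons]

/-- `FinishesBy P d T L`: when the items of `L` are processed one after the other from time `0`,
item `a` taking time `d a`, every item satisfying `P` is finished by time `T`. -/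
def FinishesBy (P : α → Prop) (d : α → ℝ) : ℝ → List α → Prop
  | _, [] => True
  | T, a :: L => (P a → d a ≤ T) ∧ FinishesBy P d (T - d a) L

namespace FinishesBy

variable {P : α → Prop} {d : α → ℝ}

@[simp]
theorem nil (T : ℝ) : FinishesBy P d T [] := trivial

@[simp]
theorem cons_iff {T : ℝ} {a : α} {L : List α} :
    FinishesBy P d T (a :: L) ↔ (P a → d a ≤ T) ∧ FinishesBy P d (T - d a) L := Iff.rfl

theorem append_iff {T : ℝ} {L₁ L₂ : List α} :
    FinishesBy P d T (L₁ ++ L₂) ↔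
      FinishesBy P d T L₁ ∧ FinishesBy P d (T - (L₁.map d).sum) L₂ := by
  induction L₁ generalizing T with
  | nil => simp
  | cons a L₁ ih => simp [ih, sub_sub, and_assoc]

theorem mono {T T' : ℝ} {L : List α} (h : FinishesBy P d T L) (hT : T ≤ T') :
    FinishesBy P d T' L := by
  induction L generalizing T T' with
  | nil => trivial
  | cons a L ih =>
    exact ⟨fun ha => (h.1 ha).trans hT, ih h.2 (by linarith)⟩

theorem iff_forall_take {T : ℝ} {L : List α} :
    FinishesBy P d T L ↔
      ∀ k : Fin L.length, P (L.get k) → ((L.take (k + 1)).map d).sum ≤ T := by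
  induction L generalizing T with
  | nil => simp
  | cons a L ih =>
    rw [cons_iff, ih]
    refine Iff.trans ?_ (Fin.forall_fin_succ (n := L.length)).symm
    simp [le_sub_iff_add_le']

theorem move_later {T : ℝ} {A B D : List α} {c : α}
    (h : FinishesBy P d T (A ++ c :: (B ++ D))) (hc₀ : 0 ≤ d c)
    (hc : P c → (A.map d).sum + (B.map d).sum + d c ≤ T) :
    FinishesBy P d T (A ++ B ++ [c] ++ D) := by
  simp only [append_iff, cons_iff, nil, List.map_append, List.sum_append, List.map_cons,
    List.map_nil, List.sum_cons, List.sum_nil] at h ⊢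
  obtain ⟨hA, -, hB, hD⟩ := h
  refine ⟨⟨⟨hA, hB.mono (by linarith)⟩, fun hPc => by linarith [hc hPc], trivial⟩,
    hD.mono (by linarith)⟩

end FinishesBy

theorem IsSchedule.of_perm {F : ℕ} {L L' : List ((Fin F → ℝ) × ℝ)} (h : IsSchedule L)
    (hperm : L'.Perm L) : IsSchedule L' :=
  fun seg hseg => h seg (hperm.subset hseg)

theorem feasibleSchedule_iff_finishesBy {F : ℕ} {s t : Fin F → ℝ}
    {L : List ((Fin F → ℝ) × ℝ)} :
    FeasibleSchedule s t L ↔ IsSchedule L ∧ ∀ f : Fin F,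
      (L.map fun seg => seg.1 f * seg.2).sum = s f ∧
        FinishesBy (fun seg => 0 < seg.1 f) Prod.snd (t f) L := by
  simp only [FeasibleSchedule, FinishesBy.iff_forall_take]

theorem FeasibleSchedule.move_later {F : ℕ} {s t : Fin F → ℝ}
    {A B D : List ((Fin F → ℝ) × ℝ)} {c : (Fin F → ℝ) × ℝ}
    (h : FeasibleSchedule s t (A ++ c :: (B ++ D)))
    (hc : ∀ f, 0 < c.1 f → (A.map Prod.snd).sum + (B.map Prod.snd).sum + c.2 ≤ t f) :
    FeasibleSchedule s t (A ++ B ++ [c] ++ D) := by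
  rw [feasibleSchedule_iff_finishesBy] at h ⊢
  obtain ⟨hsched, hflow⟩ := h
  have hperm : (A ++ B ++ [c] ++ D).Perm (A ++ c :: (B ++ D)) := by
    simpa using List.perm_middle.append_left A
  refine ⟨hsched.of_perm hperm, fun f => ⟨?_, ?_⟩⟩
  · rw [(hperm.map _).sum_eq]
    exact (hflow f).1
  · exact (hflow f).2.move_later (hsched c (by simp)).2 (hc f)

theorem move_segment_later_feasible_general {F : ℕ}
    (s t : Fin F → ℝ)
    (hmono : Monotone t)
    (L : List ((Fin F → ℝ) × ℝ)) (hL : FeasibleSchedule s t L)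
    (p q : Fin L.length) (hpq : (p : ℕ) < (q : ℕ))
    (hswap : ∃ f' : Fin F, 0 < (L.get q).1 f' ∧ ∀ i ≤ f', (L.get p).1 i = 0) :
    FeasibleSchedule s t
      (L.take (p : ℕ) ++ (L.drop ((p : ℕ) + 1)).take ((q : ℕ) - (p : ℕ)) ++
        [L.get p] ++ L.drop ((q : ℕ) + 1)) := by
  obtain ⟨f', hqf', hpzero⟩ := hswap
  have hq := (hL.2 f').2 q hqf'
  rw [L.take_succ_eq_take_append_getElem_cons p.isLt hpq.le] at hq
  simp only [List.map_append, List.map_cons, List.sum_append, List.sum_cons] at hq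
  rw [L.eq_take_append_getElem_cons_drop p.isLt hpq.le] at hL
  refine hL.move_later fun f hpf => ?_
  have hf'f : f' ≤ f := not_lt.mp fun hlt => hpf.ne' (hpzero f hlt.le)
  linarith [hmono hf'f]

/-- if segment `q` has positive rate for some flow `f′` and segment
`p < q` has zero rate for every flow `i ≤ f′`, then deleting segment `p` and
reinserting it immediately after segment `q` preserves feasibility. -/
theorem move_segment_later_feasible {F : ℕ} (hF : 1 ≤ F)
    (s t : Fin F → ℝ) (hs : ∀ f, 0 < s f) (ht : ∀ f, 0 < t f)
    (hmono : Monotone t)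
    (L : List ((Fin F → ℝ) × ℝ)) (hL : FeasibleSchedule s t L)
    (p q : Fin L.length) (hpq : (p : ℕ) < (q : ℕ))
    (hswap : ∃ f' : Fin F, 0 < (L.get q).1 f' ∧ ∀ i ≤ f', (L.get p).1 i = 0) :
    FeasibleSchedule s t
      (L.take (p : ℕ) ++ (L.drop ((p : ℕ) + 1)).take ((q : ℕ) - (p : ℕ)) ++
        [L.get p] ++ L.drop ((q : ℕ) + 1)) :=
  move_segment_later_feasible_general s t hmono L hL p q hpq hswap
end
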